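/- arXiv:2509.21614 — 2 statements merged into one kernel-verified Lean document; each statement's English description precedes it below -/
import Mathlib

section
/- Balistic-regime one-step covariance for the second momentum: with g = ∇f(θ) + (σ/√τ) z, E[z]=0, Cov(z)=τΣ(θ), third moments of z bounded by K(θ)τ^{5/2}, and M(θ) the covariance of (z/√τ)^{⊙2}, the increment Δu = −τu + τ g^{⊙2} satisfies E[(Δu − E Δu)(Δu − E Δu)^T] = τ²(σ⁴ M(θ) + 4σ² diag(∇f(θ)) Σ(θ) diag(∇f(θ))) + O(τ^{5/2}·τ^{1/2}) = that expression up to terms of order τ³. -/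
/-!
Writing `g_k = ∇f_k + σ z_k / √τ`, the increment is `τ(∇f_k² − u_k) + 2σ√τ ∇f_k z_k + σ² z_k²`,
so by bilinearity its covariance splits into `4σ²τ ∇f_i ∇f_j Cov(z_i, z_j) = 4σ²τ² ∇f_i Σ_ij ∇f_j`,
`σ⁴ Cov(z_i², z_j²) = σ⁴τ² M_ij`, and two cross terms `2σ³√τ ∇f E[z z²]`. Low skewness makes the
third moments `O(τ^{5/2})`, so the cross terms are `O(τ³)`.
-/

open MeasureTheory ProbabilityTheory

lemma mul_sq_add_div_sqrt_mul {τ : ℝ} (hτ : 0 < τ) (a σ x : ℝ) :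
    τ * (a + σ / Real.sqrt τ * x) ^ 2
      = τ * a ^ 2 + 2 * a * σ * Real.sqrt τ * x + σ ^ 2 * x ^ 2 := by
  have hsq : Real.sqrt τ ^ 2 = τ := Real.sq_sqrt hτ.le
  have hs0 : Real.sqrt τ ≠ 0 := (Real.sqrt_pos.2 hτ).ne'
  generalize Real.sqrt τ = s at hsq hs0 ⊢
  subst hsq
  field_simp
  ring

lemma covariance_eq_sq_mul_integral_div_sub {Ω : Type*} [MeasurableSpace Ω] {μ : Measure Ω}
    {X Y : Ω → ℝ} {τ s t : ℝ} (hτ : τ ≠ 0) (hX : μ[X] = τ * s) (hY : μ[Y] = τ * t) :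
    cov[X, Y; μ] = τ ^ 2 * ∫ ω, (X ω / τ - s) * (Y ω / τ - t) ∂μ := by
  rw [covariance, hX, hY, ← integral_const_mul]
  congr 1 with ω
  field_simp

section Covariance

variable {Ω : Type*} [MeasurableSpace Ω] {μ : Measure Ω} [IsProbabilityMeasure μ]

lemma covariance_eq_integral_mul_of_integral_eq_zero_left {X Y : Ω → ℝ}
    (hX : MemLp X 2 μ) (hY : MemLp Y 2 μ) (hX0 : μ[X] = 0) :
    cov[X, Y; μ] = ∫ ω, X ω * Y ω ∂μ := by
  rw [covariance_eq_sub hX hY, hX0, zero_mul, sub_zero]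
  rfl

lemma covariance_const_add_mul_add_mul {Y Z Y' Z' : Ω → ℝ}
    (hY : MemLp Y 2 μ) (hZ : MemLp Z 2 μ) (hY' : MemLp Y' 2 μ) (hZ' : MemLp Z' 2 μ)
    (c α β c' α' β' : ℝ) :
    cov[fun ω ↦ c + α * Y ω + β * Z ω, fun ω ↦ c' + α' * Y' ω + β' * Z' ω; μ]
      = α * α' * cov[Y, Y'; μ] + α * β' * cov[Y, Z'; μ]
        + β * α' * cov[Z, Y'; μ] + β * β' * cov[Z, Z'; μ] := by
  have hcomb : ∀ (c α β : ℝ) (Y Z : Ω → ℝ),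
      (fun ω ↦ c + α * Y ω + β * Z ω) = fun ω ↦ c + (α • Y + β • Z) ω := by
    intro c α β Y Z
    ext ω
    simp only [Pi.add_apply, Pi.smul_apply, smul_eq_mul, add_assoc]
  have hL : MemLp (α • Y + β • Z) 2 μ := (hY.const_smul α).add (hZ.const_smul β)
  have hR : MemLp (α' • Y' + β' • Z') 2 μ := (hY'.const_smul α').add (hZ'.const_smul β')
  rw [hcomb, hcomb, covariance_const_add_left (hL.integrable one_le_two),
    covariance_const_add_right (hR.integrable one_le_two),
    covariance_add_left (hY.const_smul α) (hZ.const_smul β) hR,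
    covariance_add_right (hY.const_smul α) (hY'.const_smul α') (hZ'.const_smul β'),
    covariance_add_right (hZ.const_smul β) (hY'.const_smul α') (hZ'.const_smul β')]
  simp only [covariance_smul_left, covariance_smul_right]
  ring

lemma covariance_second_moment_increment {τ : ℝ} (hτ : 0 < τ) {x y : Ω → ℝ}
    (hx : MemLp x 2 μ) (hy : MemLp y 2 μ)
    (hx2 : MemLp (fun ω ↦ x ω ^ 2) 2 μ) (hy2 : MemLp (fun ω ↦ y ω ^ 2) 2 μ)
    (hx0 : μ[x] = 0) (hy0 : μ[y] = 0) (σ a b u v : ℝ) :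
    cov[fun ω ↦ -(τ * u) + τ * (a + σ / Real.sqrt τ * x ω) ^ 2,
        fun ω ↦ -(τ * v) + τ * (b + σ / Real.sqrt τ * y ω) ^ 2; μ]
      = 4 * σ ^ 2 * τ * a * b * ∫ ω, x ω * y ω ∂μ
        + 2 * σ ^ 3 * Real.sqrt τ *
          (a * ∫ ω, x ω * y ω ^ 2 ∂μ + b * ∫ ω, y ω * x ω ^ 2 ∂μ)
        + σ ^ 4 * cov[fun ω ↦ x ω ^ 2, fun ω ↦ y ω ^ 2; μ] := by
  have hexpand : ∀ (a u : ℝ) (x : Ω → ℝ),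
      (fun ω ↦ -(τ * u) + τ * (a + σ / Real.sqrt τ * x ω) ^ 2)
        = fun ω ↦ (-(τ * u) + τ * a ^ 2) + 2 * a * σ * Real.sqrt τ * x ω + σ ^ 2 * x ω ^ 2 := by
    intro a u x
    ext ω
    rw [mul_sq_add_div_sqrt_mul hτ]
    ring
  rw [hexpand, hexpand, covariance_const_add_mul_add_mul hx hx2 hy hy2,
    covariance_eq_integral_mul_of_integral_eq_zero_left hx hy hx0,
    covariance_eq_integral_mul_of_integral_eq_zero_left hx hy2 hx0,
    covariance_comm (fun ω ↦ x ω ^ 2) y,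
    covariance_eq_integral_mul_of_integral_eq_zero_left hy hx2 hy0]
  have hsq : Real.sqrt τ * Real.sqrt τ = τ := Real.mul_self_sqrt hτ.le
  linear_combination (4 * a * b * σ ^ 2 * ∫ ω, x ω * y ω ∂μ) * hsq

end Covariance

section Moments

variable {Ω : Type*} [MeasurableSpace Ω] {μ : Measure Ω} {d N : ℕ} {w : Ω → Fin d → ℝ}

lemma integrable_pow_mul_pow_of_moments
    (hint : ∀ p : Fin d → ℕ, ∑ i, p i ≤ N → Integrable (fun ω ↦ ∏ i, w ω i ^ p i) μ)
    {m n : ℕ} (hmn : m + n ≤ N) (i j : Fin d) :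
    Integrable (fun ω ↦ w ω i ^ m * w ω j ^ n) μ := by
  have hp : ∑ k, (Pi.single i m + Pi.single j n : Fin d → ℕ) k ≤ N := by
    simpa [Finset.sum_add_distrib] using hmn
  convert hint _ hp using 2 with ω
  simp only [Pi.add_apply, pow_add, Finset.prod_mul_distrib, Pi.single_apply, pow_ite, pow_zero,
    Finset.prod_ite_eq', Finset.mem_univ, if_true]

lemma memLp_two_pow_of_moments
    (hint : ∀ p : Fin d → ℕ, ∑ i, p i ≤ N → Integrable (fun ω ↦ ∏ i, w ω i ^ p i) μ)
    {m : ℕ} (hm : 2 * m ≤ N) (i : Fin d) :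
    MemLp (fun ω ↦ w ω i ^ m) 2 μ := by
  have hint_m : Integrable (fun ω ↦ w ω i ^ m) μ := by
    simpa using integrable_pow_mul_pow_of_moments hint (m := m) (n := 0) (by omega) i i
  refine (memLp_two_iff_integrable_sq hint_m.aestronglyMeasurable).2 ?_
  simpa [← pow_mul, ← pow_add, mul_two] using
    integrable_pow_mul_pow_of_moments hint (m := m) (n := m) (by omega) i i

end Moments

lemma abs_sqrt_mul_le_of_abs_le_rpow {τ K T : ℝ} (hτ : 0 < τ)
    (hT : |T| ≤ K * τ ^ ((5 : ℝ) / 2)) : |Real.sqrt τ * T| ≤ K * τ ^ 3 := by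
  have hpow : Real.sqrt τ * τ ^ ((5 : ℝ) / 2) = τ ^ 3 := by
    rw [Real.sqrt_eq_rpow, ← Real.rpow_add hτ, ← Real.rpow_natCast]
    norm_num
  calc |Real.sqrt τ * T| = Real.sqrt τ * |T| := by
        rw [abs_mul, abs_of_nonneg (Real.sqrt_nonneg τ)]
    _ ≤ Real.sqrt τ * (K * τ ^ ((5 : ℝ) / 2)) := by gcongr
    _ = K * τ ^ 3 := by rw [mul_left_comm, hpow]

lemma abs_two_mul_cube_mul_add_mul_le {σ a b s t A B : ℝ} (ha : |a| ≤ A) (hb : |b| ≤ A)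
    (hs : |s| ≤ B) (ht : |t| ≤ B) :
    |2 * σ ^ 3 * (a * s + b * t)| ≤ 4 * |σ| ^ 3 * A * B := by
  have hA : 0 ≤ A := (abs_nonneg a).trans ha
  calc |2 * σ ^ 3 * (a * s + b * t)| ≤ 2 * |σ| ^ 3 * (|a| * |s| + |b| * |t|) := by
        rw [abs_mul, abs_mul, abs_pow, abs_two, ← abs_mul, ← abs_mul]
        gcongr
        exact abs_add_le _ _
    _ ≤ 2 * |σ| ^ 3 * (A * B + A * B) := by gcongr
    _ = 4 * |σ| ^ 3 * A * B := by ring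

theorem rmsprop_one_step_second_momentum_covariance_general
    {Ω : Type*} [MeasurableSpace Ω] (μ : Measure Ω) [IsProbabilityMeasure μ]
    (d : ℕ) (σ Kc : ℝ)
    (Df u : Fin d → ℝ) (S Mm : Fin d → Fin d → ℝ)
    (z : ℝ → Ω → Fin d → ℝ)
    (hint : ∀ τ ∈ Set.Ioo (0 : ℝ) 1, ∀ p : Fin d → ℕ, (∑ i, p i) ≤ 4 →
      Integrable (fun ω => ∏ i, (z τ ω i) ^ p i) μ)
    (hz : ∀ τ ∈ Set.Ioo (0 : ℝ) 1, ∀ i, ∫ ω, z τ ω i ∂μ = 0)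
    (hcov : ∀ τ ∈ Set.Ioo (0 : ℝ) 1, ∀ i j, ∫ ω, z τ ω i * z τ ω j ∂μ = τ * S i j)
    (h3 : ∀ τ ∈ Set.Ioo (0 : ℝ) 1, ∀ i j k,
      |∫ ω, z τ ω i * z τ ω j * z τ ω k ∂μ| ≤ Kc * τ ^ ((5 : ℝ) / 2))
    (hM : ∀ τ ∈ Set.Ioo (0 : ℝ) 1, ∀ i j,
      ∫ ω, ((z τ ω i) ^ 2 / τ - S i i) * ((z τ ω j) ^ 2 / τ - S j j) ∂μ = Mm i j) :
    ∃ C : ℝ, 0 ≤ C ∧ ∀ τ ∈ Set.Ioo (0 : ℝ) 1, ∀ i j,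
      |(∫ ω,
          ((-(τ * u i) + τ * (Df i + σ / Real.sqrt τ * z τ ω i) ^ 2)
            - ∫ ω', (-(τ * u i) + τ * (Df i + σ / Real.sqrt τ * z τ ω' i) ^ 2) ∂μ) *
          ((-(τ * u j) + τ * (Df j + σ / Real.sqrt τ * z τ ω j) ^ 2)
            - ∫ ω', (-(τ * u j) + τ * (Df j + σ / Real.sqrt τ * z τ ω' j) ^ 2) ∂μ) ∂μ)
        - τ ^ 2 * (σ ^ 4 * Mm i j + 4 * σ ^ 2 * Df i * S i j * Df j)|
      ≤ C * τ ^ 3 := by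
  set A := ∑ k, |Df k|
  refine ⟨4 * |σ| ^ 3 * |Kc| * A, by positivity, fun τ hτ i j => ?_⟩
  have hL2 : ∀ k, MemLp (fun ω ↦ z τ ω k) 2 μ := fun k ↦ by
    simpa using memLp_two_pow_of_moments (hint τ hτ) (m := 1) (by norm_num) k
  have hL2sq : ∀ k, MemLp (fun ω ↦ z τ ω k ^ 2) 2 μ := fun k ↦
    memLp_two_pow_of_moments (hint τ hτ) (by norm_num) k
  have hsq_mean : ∀ k, ∫ ω, z τ ω k ^ 2 ∂μ = τ * S k k := fun k ↦ by
    simpa [sq] using hcov τ hτ k k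
  have hskew : ∀ k l, |Real.sqrt τ * ∫ ω, z τ ω k * z τ ω l ^ 2 ∂μ| ≤ |Kc| * τ ^ 3 := by
    intro k l
    refine (abs_sqrt_mul_le_of_abs_le_rpow hτ.1 ?_).trans
      (mul_le_mul_of_nonneg_right (le_abs_self Kc) (pow_nonneg hτ.1.le 3))
    simpa [sq, mul_assoc] using h3 τ hτ k l l
  have hDf : ∀ k, |Df k| ≤ A := fun k ↦
    Finset.single_le_sum (f := fun k ↦ |Df k|) (fun _ _ ↦ abs_nonneg _) (Finset.mem_univ k)
  show |cov[_, _; μ] - _| ≤ _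
  rw [covariance_second_moment_increment hτ.1 (hL2 i) (hL2 j) (hL2sq i) (hL2sq j) (hz τ hτ i)
    (hz τ hτ j), covariance_eq_sq_mul_integral_div_sub hτ.1.ne' (hsq_mean i) (hsq_mean j),
    hM τ hτ i j, hcov τ hτ i j]
  calc _ = |2 * σ ^ 3 * (Df i * (Real.sqrt τ * ∫ ω, z τ ω i * z τ ω j ^ 2 ∂μ)
              + Df j * (Real.sqrt τ * ∫ ω, z τ ω j * z τ ω i ^ 2 ∂μ))| := by
        congr 1
        ring
    _ ≤ 4 * |σ| ^ 3 * A * (|Kc| * τ ^ 3) :=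
        abs_two_mul_cube_mul_add_mul_le (hDf i) (hDf j) (hskew i j) (hskew j i)
    _ = 4 * |σ| ^ 3 * |Kc| * A * τ ^ 3 := by ring

/-- balistic-regime one-step covariance of the second-momentum increment
`Δu = −τu + τ g^{⊙2}`, `g = ∇f(θ) + (σ/√τ) z`: under the low-skewness condition
(third moments of `z` bounded by `Kc τ^{5/2}`),
`Cov(Δu) = τ²(σ⁴ M(θ) + 4σ² diag(∇f) Σ diag(∇f)) + O(τ³)`. -/
theorem rmsprop_one_step_second_momentum_covariance
    {Ω : Type*} [MeasurableSpace Ω] (μ : Measure Ω) [IsProbabilityMeasure μ]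
    (d : ℕ) (σ Kc : ℝ) (hσ : 0 < σ) (hKc : 0 ≤ Kc)
    (Df u : Fin d → ℝ) (S Mm : Fin d → Fin d → ℝ)
    (z : ℝ → Ω → Fin d → ℝ)
    (hint : ∀ τ ∈ Set.Ioo (0 : ℝ) 1, ∀ p : Fin d → ℕ, (∑ i, p i) ≤ 4 →
      Integrable (fun ω => ∏ i, (z τ ω i) ^ p i) μ)
    (hz : ∀ τ ∈ Set.Ioo (0 : ℝ) 1, ∀ i, ∫ ω, z τ ω i ∂μ = 0)
    (hcov : ∀ τ ∈ Set.Ioo (0 : ℝ) 1, ∀ i j, ∫ ω, z τ ω i * z τ ω j ∂μ = τ * S i j)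
    (h3 : ∀ τ ∈ Set.Ioo (0 : ℝ) 1, ∀ i j k,
      |∫ ω, z τ ω i * z τ ω j * z τ ω k ∂μ| ≤ Kc * τ ^ ((5 : ℝ) / 2))
    (hM : ∀ τ ∈ Set.Ioo (0 : ℝ) 1, ∀ i j,
      ∫ ω, ((z τ ω i) ^ 2 / τ - S i i) * ((z τ ω j) ^ 2 / τ - S j j) ∂μ = Mm i j) :
    ∃ C : ℝ, 0 ≤ C ∧ ∀ τ ∈ Set.Ioo (0 : ℝ) 1, ∀ i j,
      |(∫ ω,
          ((-(τ * u i) + τ * (Df i + σ / Real.sqrt τ * z τ ω i) ^ 2)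
            - ∫ ω', (-(τ * u i) + τ * (Df i + σ / Real.sqrt τ * z τ ω' i) ^ 2) ∂μ) *
          ((-(τ * u j) + τ * (Df j + σ / Real.sqrt τ * z τ ω j) ^ 2)
            - ∫ ω', (-(τ * u j) + τ * (Df j + σ / Real.sqrt τ * z τ ω' j) ^ 2) ∂μ) ∂μ)
        - τ ^ 2 * (σ ^ 4 * Mm i j + 4 * σ ^ 2 * Df i * S i j * Df j)|
      ≤ C * τ ^ 3 :=
  rmsprop_one_step_second_momentum_covariance_general μ d σ Kc Df u S Mm z hint hz hcov h3 hM
end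

section
/- Discrete-vs-continuous normalization matching: define γ̄(k) = 1 − (1−λτ)^k and γ(t) = 1 − exp(−t Σ_{j=1}^5 λ^j τ^{j-1}/j). Then for every T>0 there is C>0 independent of τ ∈ (0, 1/(2λ)) such that |γ̄(k) − γ(kτ)| ≤ C τ² for all k with kτ ≤ T. -/
/-!
Write `x = λτ ∈ (0, 1/2)`. Then `(1 - x)^k = exp (k log (1 - x))`, while the exponent of `γ` is
`-k ∑_{j<5} x^(j+1)/(j+1)`, the degree-5 truncation of `k log (1 - x)`. The truncation error of the
logarithm series is at most `x^6 / (1 - x) ≤ 2 x^6`, so the two exponents differ by at most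
`2 k x^6 ≤ 2 (kτ) λ^3 x^3 τ^2 ≤ λ^3 T τ^2 / 4`. Both exponents are nonpositive, and `exp` is
1-Lipschitz on `(-∞, 0]`.
-/

open Finset Real

lemma abs_exp_sub_exp_le_of_nonpos {a b : ℝ} (ha : a ≤ 0) (hb : b ≤ 0) :
    |exp a - exp b| ≤ |a - b| := by
  wlog hba : b ≤ a generalizing a b
  · rw [abs_sub_comm, abs_sub_comm a]
    exact this hb ha (le_of_not_ge hba)
  have hgap : 1 - exp (b - a) ≤ a - b := by linarith [add_one_le_exp (b - a)]
  have hfactor : exp a - exp b = exp a * (1 - exp (b - a)) := by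
    rw [mul_sub, ← exp_add]; ring_nf
  rw [abs_of_nonneg (sub_nonneg.2 (exp_le_exp.2 hba)), abs_of_nonneg (sub_nonneg.2 hba), hfactor]
  calc exp a * (1 - exp (b - a)) ≤ 1 * (1 - exp (b - a)) := by
        gcongr
        · linarith [exp_le_one_iff.2 (show b - a ≤ 0 by linarith)]
        · exact exp_le_one_iff.2 ha
    _ ≤ a - b := by linarith

lemma abs_sum_range_pow_div_add_log_le {x : ℝ} (hx0 : 0 ≤ x) (hx : x ≤ 1 / 2) (n : ℕ) :
    |(∑ i ∈ range n, x ^ (i + 1) / (i + 1)) + log (1 - x)| ≤ 2 * x ^ (n + 1) := by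
  have hx1 : |x| < 1 := by rw [abs_of_nonneg hx0]; linarith
  calc _ ≤ |x| ^ (n + 1) / (1 - |x|) := abs_log_sub_add_sum_range_le hx1 n
    _ ≤ 2 * x ^ (n + 1) := by
        rw [abs_of_nonneg hx0, div_le_iff₀ (by linarith)]
        nlinarith [pow_nonneg hx0 (n + 1)]

lemma abs_one_sub_pow_sub_exp_le {x : ℝ} (hx0 : 0 ≤ x) (hx : x ≤ 1 / 2) (k n : ℕ) :
    |(1 - x) ^ k - exp (-(k * ∑ i ∈ range n, x ^ (i + 1) / (i + 1)))| ≤ 2 * k * x ^ (n + 1) := by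
  set S := ∑ i ∈ range n, x ^ (i + 1) / (i + 1)
  have hS_nonneg : 0 ≤ S := sum_nonneg fun i _ => by positivity
  have hlog_nonpos : log (1 - x) ≤ 0 := log_nonpos (by linarith) (by linarith)
  rw [← exp_log (show 0 < 1 - x by linarith), ← exp_nat_mul]
  calc |exp (k * log (1 - x)) - exp (-(k * S))|
      ≤ |k * log (1 - x) - -(k * S)| :=
        abs_exp_sub_exp_le_of_nonpos (mul_nonpos_of_nonneg_of_nonpos k.cast_nonneg hlog_nonpos)
          (neg_nonpos.2 (mul_nonneg k.cast_nonneg hS_nonneg))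
    _ = k * |S + log (1 - x)| := by
        rw [show k * log (1 - x) - -(k * S) = k * (S + log (1 - x)) by ring, abs_mul, Nat.abs_cast]
    _ ≤ k * (2 * x ^ (n + 1)) := by
        gcongr; exact abs_sum_range_pow_div_add_log_le hx0 hx n
    _ = 2 * k * x ^ (n + 1) := by ring

lemma mul_sum_range_pow_div_eq (lam τ : ℝ) (n : ℕ) :
    τ * ∑ j ∈ range n, lam ^ (j + 1) * τ ^ j / (j + 1) =
      ∑ j ∈ range n, (lam * τ) ^ (j + 1) / (j + 1) := by
  rw [mul_sum]
  refine sum_congr rfl fun j _ => ?_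
  ring

/-- discrete-vs-continuous bias-correction matching in Adam:
`γ̄(k) = 1 − (1−λτ)^k` and `γ(t) = 1 − exp(−t Σ_{j=1}^5 λ^j τ^{j−1}/j)` differ by `O(τ²)`
uniformly for `kτ ≤ T`. -/
theorem gamma_normalization_matching
    (lam T : ℝ) (hlam : 0 < lam) (hT : 0 < T) :
    ∃ C : ℝ, 0 ≤ C ∧ ∀ τ ∈ Set.Ioo (0 : ℝ) (1 / (2 * lam)), ∀ k : ℕ, (k : ℝ) * τ ≤ T →
      |(1 - (1 - lam * τ) ^ k) -
        (1 - Real.exp (-((k : ℝ) * τ *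
          ∑ j ∈ Finset.range 5, lam ^ (j + 1) * τ ^ j / (j + 1))))| ≤ C * τ ^ 2 := by
  refine ⟨lam ^ 3 * T / 4, by positivity, ?_⟩
  rintro τ ⟨hτ0, hτ⟩ k hkT
  have hx0 : 0 < lam * τ := by positivity
  have hx : lam * τ ≤ 1 / 2 := by
    rw [lt_div_iff₀ (by positivity)] at hτ; linarith
  have hx3 : (lam * τ) ^ 3 ≤ 1 / 8 := by
    calc (lam * τ) ^ 3 ≤ (1 / 2) ^ 3 := by gcongr
      _ = 1 / 8 := by norm_num
  rw [sub_sub_sub_cancel_left, abs_sub_comm, mul_assoc, mul_sum_range_pow_div_eq]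
  calc _ ≤ 2 * k * (lam * τ) ^ 6 := abs_one_sub_pow_sub_exp_le hx0.le hx k 5
    _ = 2 * (k * τ) * lam ^ 3 * (lam * τ) ^ 3 * τ ^ 2 := by ring
    _ ≤ 2 * T * lam ^ 3 * (1 / 8) * τ ^ 2 := by gcongr
    _ = lam ^ 3 * T / 4 * τ ^ 2 := by ring
end
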